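/- For n ≥ 1, the number of functions f : {1,...,n} → {1,...,n} such that for all i < j, f(j) − (j − i) is not in the interval [1, f(i) − 1], equals the sum over k from 0 to n−1 of C_k^(n−1−k) · C_{n−k}, where C_m^(j) = ((j+1)/(2m+j+1)) · binomial(2m+j+1, m) and C_m is the m-th Catalan number. -/

import Mathlib

def gc (n k : ℕ) : ℚ := ((k : ℚ) + 1) / (2 * (n : ℚ) + (k : ℚ) + 1) * ((2 * n + k + 1).choose n : ℚ)

def cat (n : ℕ) : ℚ := 1 / ((n : ℚ) + 1) * ((2 * n).choose n : ℚ)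

def Cond {n : ℕ} (u : Fin n → ℕ) : Prop :=
  ∀ i j : Fin n, i < j →
    ¬(1 ≤ (u j : ℤ) - (((j : ℕ) : ℤ) - ((i : ℕ) : ℤ)) ∧
      (u j : ℤ) - (((j : ℕ) : ℤ) - ((i : ℕ) : ℤ)) ≤ (u i : ℤ) - 1)

/-!
Positions are counted from `0`. An admissible `f` splits at the last position `k` with `k < f k`:
every later entry satisfies `f p + k ≤ p`, so the tail, read from position `k + 1`, is admissible
with bounds `f i ≤ i + 1`, and any such tail may follow any admissible prefix ending high.
Dropping the last entry `k + c + 1` of such a prefix leaves an admissible sequence with bounds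
`f i ≤ i + c + 1`. Hence the numbers `a(m, c)` of admissible sequences of length `m` with these
bounds satisfy `a(m + 1, c) = ∑_{k + l = m} (∑_{d ≤ c} a(k, d)) a(l, 0)`, which the ballot numbers
`gc m c = [x^m] C(x)^(c + 1)` also satisfy, by their Pascal rule and their convolution with the
Catalan numbers. The same splitting with the constant bound `n` gives the stated sum.
-/

open Finset

lemma gc_zero_left (c : ℕ) : gc 0 c = 1 := by
  have : (c : ℚ) + 1 ≠ 0 := by positivity
  simp [gc, this]

lemma cat_eq_catalan (m : ℕ) : cat m = catalan m := by
  have h : ((m : ℚ) + 1) * catalan m = (2 * m).choose m := by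
    exact_mod_cast succ_mul_catalan_eq_centralBinom m
  rw [cat, ← h]
  field_simp

lemma gc_zero_right (m : ℕ) : gc m 0 = catalan m := by
  have h : ((2 * m + 1 : ℕ) : ℚ) * (2 * m).choose m = (2 * m + 1).choose m * (m + 1) := by
    rw [← Nat.choose_symm_half m]
    exact_mod_cast Nat.add_one_mul_choose_eq (2 * m) m
  rw [← cat_eq_catalan, gc, cat]
  push_cast at h ⊢
  field_simp
  linear_combination -h

lemma gc_succ_zero (m : ℕ) : gc (m + 1) 0 = gc m 1 := by
  have hA : ((2 * m + 2).choose (m + 1) : ℚ) * (m + 1) = (2 * m + 2).choose m * (m + 2) := by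
    have h := Nat.choose_succ_right_eq (2 * m + 2) m
    rw [show 2 * m + 2 - m = m + 2 by omega] at h
    exact_mod_cast h
  rw [gc, gc, show 2 * (m + 1) + 0 + 1 = 2 * m + 2 + 1 by ring, Nat.choose_succ_succ',
    show 2 * m + 1 + 1 = 2 * m + 2 by ring]
  push_cast
  field_simp
  linear_combination 2 * hA

lemma gc_succ_succ (m c : ℕ) : gc (m + 1) (c + 1) = gc (m + 1) c + gc m (c + 2) := by
  have hA : ((2 * m + c + 3).choose (m + 1) : ℚ) * (m + 1)
      = (2 * m + c + 3).choose m * (m + c + 3) := by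
    have h := Nat.choose_succ_right_eq (2 * m + c + 3) m
    rw [show 2 * m + c + 3 - m = m + c + 3 by omega] at h
    exact_mod_cast h
  rw [gc, gc, gc, show 2 * (m + 1) + (c + 1) + 1 = 2 * m + c + 3 + 1 by ring,
    Nat.choose_succ_succ', show 2 * (m + 1) + c + 1 = 2 * m + c + 3 by ring,
    show 2 * m + (c + 2) + 1 = 2 * m + c + 3 by ring]
  push_cast
  field_simp
  linear_combination 2 * (2 * (m : ℚ) + c + 3) * hA

lemma sum_gc_mul_catalan (m c : ℕ) :
    ∑ p ∈ antidiagonal m, gc p.1 c * catalan p.2 = gc m (c + 1) := by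
  induction m generalizing c with
  | zero => simp [gc_zero_left]
  | succ m ihm =>
    induction c with
    | zero =>
      simp_rw [gc_zero_right]
      rw [← gc_succ_zero, gc_zero_right]
      exact_mod_cast (catalan_succ' (m + 1)).symm
    | succ c ihc =>
      rw [Nat.sum_antidiagonal_succ] at ihc ⊢
      simp_rw [gc_succ_succ, add_mul, sum_add_distrib, ihm, gc_zero_left] at ihc ⊢
      rw [show c + 1 + 2 = c + 2 + 1 from rfl]
      linear_combination ihc

lemma sum_gc_succ (m c : ℕ) : ∑ d ∈ range (c + 1), gc m (d + 1) = gc (m + 1) c := by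
  induction c with
  | zero => simp [gc_succ_zero]
  | succ c ih => rw [sum_range_succ, ih, gc_succ_succ]

lemma sum_sum_gc_mul_catalan (m c : ℕ) :
    ∑ p ∈ antidiagonal m, (∑ d ∈ range (c + 1), gc p.1 d) * catalan p.2 = gc (m + 1) c := by
  simp_rw [sum_mul]
  rw [sum_comm]
  simp_rw [sum_gc_mul_catalan]
  exact sum_gc_succ m c

lemma sum_sum_gc_mul_catalan_eq_sum_gc_mul_catalan_succ (N : ℕ) :
    ∑ p ∈ antidiagonal N, (∑ d ∈ range (p.2 + 1), gc p.1 d) * catalan p.2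
      = ∑ p ∈ antidiagonal N, gc p.1 p.2 * catalan (p.2 + 1) := by
  have segner : ∑ p ∈ antidiagonal N, (catalan p.1 : ℚ) * catalan p.2 = catalan (N + 1) := by
    exact_mod_cast (catalan_succ' N).symm
  simp_rw [sum_range_succ', add_mul, sum_add_distrib, gc_zero_right, segner]
  cases N with
  | zero => simp [gc_zero_left]
  | succ M =>
    rw [Nat.sum_antidiagonal_succ', Nat.sum_antidiagonal_succ, gc_zero_left]
    simp [sum_gc_succ, add_comm]

namespace AdmissibleSeq

/-- `Cond` with positions counted from `0`, written without subtraction. -/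
def Admissible {m : ℕ} (f : Fin m → ℕ) : Prop :=
  ∀ i j : Fin m, i < j → f j + i ≤ j ∨ f i + j ≤ f j + i

lemma cond_iff_admissible {m : ℕ} (f : Fin m → ℕ) : Cond f ↔ Admissible f :=
  forall₂_congr fun i j => imp_congr_right fun hij => by
    have : (i : ℕ) < j := hij
    omega

lemma Admissible.comp_shift {a b : ℕ} {f : Fin b → ℕ} (hf : Admissible f) (d : ℕ)
    (e : Fin a → Fin b) (he : ∀ i, (e i : ℕ) = i + d) : Admissible (f ∘ e) := by
  intro i j hij
  have := hf (e i) (e j) (by rw [Fin.lt_def, he, he]; exact Nat.add_lt_add_right hij d)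
  rw [he, he] at this
  simp only [Function.comp_apply]
  omega

def seqs (cap : ℕ → ℕ) (m : ℕ) : Set (Fin m → ℕ) :=
  {f | (∀ i, 1 ≤ f i ∧ f i ≤ cap i) ∧ Admissible f}

instance (cap : ℕ → ℕ) (m : ℕ) : Finite (seqs cap m) :=
  ((Set.Finite.pi fun i : Fin m => Set.finite_Icc 1 (cap i)).subset
    fun _ hf i _ => hf.1 i).to_subtype

noncomputable def admCount (m c : ℕ) : ℕ := Nat.card (seqs (fun i => i + c + 1) m)

def IsLastHigh {m : ℕ} (f : Fin m → ℕ) (k : ℕ) : Prop :=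
  ∃ hk : k < m, k < f ⟨k, hk⟩ ∧ ∀ p : Fin m, k < p → f p ≤ p

lemma exists_isLastHigh {m : ℕ} {f : Fin (m + 1) → ℕ} (hf : 0 < f 0) : ∃ k, IsLastHigh f k := by
  classical
  set S := univ.filter fun i : Fin (m + 1) => (i : ℕ) < f i
  have hS : S.Nonempty := ⟨0, by simpa [S] using hf⟩
  refine ⟨S.max' hS, (S.max' hS).isLt, (mem_filter.1 (S.max'_mem hS)).2, fun p hp => ?_⟩
  by_contra h
  exact not_le.2 hp (S.le_max' p (mem_filter.2 ⟨mem_univ p, not_le.1 h⟩))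

lemma IsLastHigh.le {m : ℕ} {f : Fin m → ℕ} {k k' : ℕ} (hk : IsLastHigh f k)
    (hk' : IsLastHigh f k') : k' ≤ k := by
  obtain ⟨-, -, hlow⟩ := hk
  obtain ⟨hk'm, hhigh, -⟩ := hk'
  by_contra h
  exact absurd (hlow ⟨k', hk'm⟩ (not_le.1 h)) (not_le.2 hhigh)

lemma IsLastHigh.add_le {m : ℕ} {f : Fin m → ℕ} {k : ℕ} (hf : Admissible f) (hk : IsLastHigh f k)
    (p : Fin m) (hp : k < p) : f p + k ≤ p := by
  obtain ⟨hkm, hhigh, hlow⟩ := hk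
  have := hlow p hp
  have := hf ⟨k, hkm⟩ p hp
  simp only at this
  omega

def highSeqs (cap : ℕ → ℕ) (k : ℕ) : Set (Fin (k + 1) → ℕ) :=
  {f | f ∈ seqs cap (k + 1) ∧ k < f (Fin.last k)}

def lastHighSeqs (cap : ℕ → ℕ) (m k : ℕ) : Set (Fin m → ℕ) :=
  {f | f ∈ seqs cap m ∧ IsLastHigh f k}

instance (cap : ℕ → ℕ) (m k : ℕ) : Finite (lastHighSeqs cap m k) :=
  Finite.Set.subset (seqs cap m) fun _ hf => hf.1

noncomputable def seqsEquivSigmaLastHigh (cap : ℕ → ℕ) (m : ℕ) :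
    seqs cap (m + 1) ≃ Σ k : Fin (m + 1), lastHighSeqs cap (m + 1) k :=
  (Equiv.ofBijective (fun x => ⟨x.2.1, x.2.2.1⟩) ⟨fun x y h => by
      have hxy : (x.2 : Fin (m + 1) → ℕ) = y.2 := congrArg Subtype.val h
      refine Sigma.subtype_ext (Fin.ext (le_antisymm ?_ ?_)) hxy
      · exact y.2.2.2.le (hxy ▸ x.2.2.2)
      · exact (hxy ▸ x.2.2.2).le y.2.2.2,
    fun f => by
      obtain ⟨k, hk⟩ := exists_isLastHigh (f.2.1 0).1
      exact ⟨⟨⟨k, hk.1⟩, f.1, f.2, hk⟩, rfl⟩⟩).symm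

variable {cap : ℕ → ℕ}

lemma append_mem_lastHighSeqs {k l : ℕ} (hcap : ∀ i < k + 1 + l, i < cap i)
    {p : Fin (k + 1) → ℕ} (hp : p ∈ highSeqs cap k) {s : Fin l → ℕ} (hs : s ∈ seqs (· + 1) l) :
    Fin.append p s ∈ lastHighSeqs cap (k + 1 + l) k := by
  obtain ⟨⟨hpb, hpa⟩, hhigh⟩ := hp
  obtain ⟨hsb, hsa⟩ := hs
  have hs_le (i : Fin l) : 1 ≤ s i ∧ s i ≤ i + 1 := hsb i
  refine ⟨⟨fun i => ?_, fun i j hij => ?_⟩, by omega, ?_, fun q hq => ?_⟩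
  · induction i using Fin.addCases with
    | left i => simpa using hpb i
    | right i =>
      have := hcap (k + 1 + i) (by omega)
      have := hs_le i
      simp only [Fin.append_right, Fin.val_natAdd]
      omega
  · induction j using Fin.addCases with
    | left j =>
      induction i using Fin.addCases with
      | left i =>
        have hij' := Fin.lt_def.1 hij
        simp only [Fin.val_castAdd] at hij'
        simpa using hpa i j (Fin.lt_def.2 hij')
      | right i =>
        have hij' := Fin.lt_def.1 hij
        simp only [Fin.val_castAdd, Fin.val_natAdd] at hij'
        omega
    | right j =>
      induction i using Fin.addCases with
      | left i =>
        have := hs_le j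
        have := i.isLt
        simp only [Fin.append_left, Fin.append_right, Fin.val_castAdd, Fin.val_natAdd]
        omega
      | right i =>
        have hij' := Fin.lt_def.1 hij
        simp only [Fin.val_natAdd] at hij'
        have := hsa i j (Fin.lt_def.2 (by omega))
        simp only [Fin.append_right, Fin.val_natAdd]
        omega
  · exact (Fin.append_left p s (Fin.last k)).symm ▸ hhigh
  · induction q using Fin.addCases with
    | left q =>
      have := q.isLt
      simp only [Fin.val_castAdd] at hq
      omega
    | right q =>
      have := hs_le q
      simp only [Fin.append_right, Fin.val_natAdd]
      omega

lemma castAdd_mem_highSeqs {k l : ℕ} {f : Fin (k + 1 + l) → ℕ}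
    (hf : f ∈ lastHighSeqs cap (k + 1 + l) k) : (fun i => f (Fin.castAdd l i)) ∈ highSeqs cap k :=
  ⟨⟨fun _ => hf.1.1 _, hf.1.2.comp_shift 0 _ fun _ => rfl⟩, hf.2.2.1⟩

lemma natAdd_mem_seqs {k l : ℕ} {f : Fin (k + 1 + l) → ℕ}
    (hf : f ∈ lastHighSeqs cap (k + 1 + l) k) :
    (fun i => f (Fin.natAdd (k + 1) i)) ∈ seqs (· + 1) l := by
  refine ⟨fun i => ⟨(hf.1.1 _).1, ?_⟩, hf.1.2.comp_shift (k + 1) _ fun i => by simp [add_comm]⟩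
  have := hf.2.add_le hf.1.2 (Fin.natAdd (k + 1) i) (by simp only [Fin.val_natAdd]; omega)
  simp only [Fin.val_natAdd] at this
  show f _ ≤ i + 1
  omega

def lastHighSeqsEquiv {k l : ℕ} (hcap : ∀ i < k + 1 + l, i < cap i) :
    lastHighSeqs cap (k + 1 + l) k ≃ highSeqs cap k × seqs (· + 1) l where
  toFun f := (⟨_, castAdd_mem_highSeqs f.2⟩, ⟨_, natAdd_mem_seqs f.2⟩)
  invFun x := ⟨_, append_mem_lastHighSeqs hcap x.1.2 x.2.2⟩
  left_inv f := Subtype.ext Fin.append_castAdd_natAdd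
  right_inv x := by ext <;> simp

lemma init_mem_seqs {k : ℕ} {f : Fin (k + 1) → ℕ} (hf : f ∈ highSeqs cap k) :
    Fin.init f ∈ seqs (fun i => i + (f (Fin.last k) - (k + 1)) + 1) k := by
  obtain ⟨⟨hb, ha⟩, hhigh⟩ := hf
  refine ⟨fun i => ⟨(hb _).1, ?_⟩, ha.comp_shift 0 _ fun _ => rfl⟩
  have := ha i.castSucc (Fin.last k) (Fin.castSucc_lt_last i)
  simp only [Fin.val_castSucc, Fin.val_last] at this
  simp only [Fin.init]
  omega

lemma snoc_mem_highSeqs {k c : ℕ} (hslope : ∀ i ≤ k, cap k + i ≤ cap i + k) (hc : c < cap k - k)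
    {g : Fin k → ℕ} (hg : g ∈ seqs (fun i => i + c + 1) k) :
    Fin.snoc g (k + c + 1) ∈ highSeqs cap k := by
  obtain ⟨hb, ha⟩ := hg
  have hg_le (i : Fin k) : 1 ≤ g i ∧ g i ≤ i + c + 1 := hb i
  refine ⟨⟨fun i => ?_, fun i j hij => ?_⟩, by simp⟩
  · induction i using Fin.lastCases with
    | last => simp only [Fin.snoc_last, Fin.val_last]; omega
    | cast i =>
      have := hg_le i
      have := hslope i i.isLt.le
      simp only [Fin.snoc_castSucc, Fin.val_castSucc]
      omega
  · induction j using Fin.lastCases with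
    | last =>
      induction i using Fin.lastCases with
      | last => exact absurd hij (lt_irrefl _)
      | cast i =>
        have := hg_le i
        simp only [Fin.snoc_castSucc, Fin.snoc_last, Fin.val_castSucc, Fin.val_last]
        omega
    | cast j =>
      induction i using Fin.lastCases with
      | last => exact absurd hij (not_lt.2 (Fin.castSucc_lt_last j).le)
      | cast i =>
        simpa only [Fin.snoc_castSucc, Fin.val_castSucc] using
          ha i j (Fin.castSucc_lt_castSucc_iff.1 hij)

def highSeqsEquiv {k : ℕ} (hslope : ∀ i ≤ k, cap k + i ≤ cap i + k) :
    highSeqs cap k ≃ Σ c : Fin (cap k - k), seqs (fun i => i + c + 1) k where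
  toFun f := ⟨⟨f.1 (Fin.last k) - (k + 1), by
      have := (f.2.1.1 (Fin.last k)).2
      have := f.2.2
      rw [Fin.val_last] at *
      omega⟩,
    Fin.init f.1, init_mem_seqs f.2⟩
  invFun x := ⟨_, snoc_mem_highSeqs hslope x.1.2 x.2.2⟩
  left_inv f := by
    have := f.2.2
    ext1
    show Fin.snoc (Fin.init f.1) _ = f.1
    rw [show k + (f.1 (Fin.last k) - (k + 1)) + 1 = f.1 (Fin.last k) by omega, Fin.snoc_init_self]
  right_inv x := Sigma.subtype_ext (Fin.ext (by simp)) (Fin.init_snoc (α := fun _ => ℕ) _ _)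

instance (cap : ℕ → ℕ) (k : ℕ) : Finite (highSeqs cap k) :=
  Finite.Set.subset (seqs cap (k + 1)) fun _ hf => hf.1

lemma card_highSeqs {k : ℕ} (hslope : ∀ i ≤ k, cap k + i ≤ cap i + k) :
    Nat.card (highSeqs cap k) = ∑ c ∈ range (cap k - k), admCount k c := by
  rw [Nat.card_congr (highSeqsEquiv hslope), Nat.card_sigma]
  exact Fin.sum_univ_eq_sum_range (admCount k) _

lemma card_lastHighSeqs {n k l : ℕ} (hcap : ∀ i < n, i < cap i) (hn : n = k + 1 + l) :
    Nat.card (lastHighSeqs cap n k) = Nat.card (highSeqs cap k) * admCount l 0 := by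
  subst hn
  rw [Nat.card_congr (lastHighSeqsEquiv hcap), Nat.card_prod]
  rfl

lemma card_seqs_succ {m : ℕ} (hcap : ∀ i < m + 1, i < cap i)
    (hslope : ∀ i j, i ≤ j → cap j + i ≤ cap i + j) :
    Nat.card (seqs cap (m + 1)) =
      ∑ p ∈ antidiagonal m, (∑ c ∈ range (cap p.1 - p.1), admCount p.1 c) * admCount p.2 0 := by
  rw [Nat.card_congr (seqsEquivSigmaLastHigh cap m), Nat.card_sigma,
    Nat.sum_antidiagonal_eq_sum_range_succ_mk, ← Fin.sum_univ_eq_sum_range]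
  refine Fintype.sum_congr _ _ fun k => ?_
  rw [card_lastHighSeqs hcap (l := m - k) (by omega), card_highSeqs fun i hi => hslope i k hi]

lemma card_seqs_zero (cap : ℕ → ℕ) : Nat.card (seqs cap 0) = 1 :=
  Nat.card_eq_one_iff_exists.2
    ⟨⟨finZeroElim, finZeroElim, finZeroElim⟩, fun _ => Subtype.ext (funext finZeroElim)⟩

lemma admCount_eq_gc (m c : ℕ) : (admCount m c : ℚ) = gc m c := by
  induction m using Nat.strong_induction_on generalizing c with
  | _ m ih =>
    cases m with
    | zero => rw [admCount, card_seqs_zero, gc_zero_left, Nat.cast_one]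
    | succ m =>
      rw [admCount, card_seqs_succ (by omega) (by omega), ← sum_sum_gc_mul_catalan]
      push_cast
      refine sum_congr rfl fun p hp => ?_
      have hp := mem_antidiagonal.1 hp
      rw [show p.1 + c + 1 - p.1 = c + 1 by omega, ih p.2 (by omega), gc_zero_right]
      simp_rw [ih p.1 (by omega)]

end AdmissibleSeq

open AdmissibleSeq in
theorem stmt11 (n : ℕ) (hn : 1 ≤ n) :
    ({f : Fin n → ℕ | (∀ i, 1 ≤ f i ∧ f i ≤ n) ∧ Cond f}.ncard : ℚ)
      = ∑ k ∈ Finset.range n, gc k (n - 1 - k) * cat (n - k) := by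
  obtain ⟨N, rfl⟩ : ∃ N, n = N + 1 := ⟨n - 1, by omega⟩
  have hset : {f : Fin (N + 1) → ℕ | (∀ i, 1 ≤ f i ∧ f i ≤ N + 1) ∧ Cond f}
      = seqs (fun _ => N + 1) (N + 1) := by
    simp only [seqs, cond_iff_admissible]
  have hcount : (Nat.card (seqs (fun _ => N + 1) (N + 1)) : ℚ)
      = ∑ p ∈ antidiagonal N, (∑ d ∈ range (p.2 + 1), gc p.1 d) * catalan p.2 := by
    rw [card_seqs_succ (by omega) (by omega)]
    push_cast
    refine sum_congr rfl fun p hp => ?_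
    rw [show N + 1 - p.1 = p.2 + 1 by have := mem_antidiagonal.1 hp; omega, admCount_eq_gc,
      gc_zero_right]
    simp_rw [admCount_eq_gc]
  rw [hset, ← Nat.card_coe_set_eq, hcount, sum_sum_gc_mul_catalan_eq_sum_gc_mul_catalan_succ,
    Nat.sum_antidiagonal_eq_sum_range_succ_mk]
  refine sum_congr rfl fun k hk => ?_
  have := mem_range.1 hk
  rw [cat_eq_catalan, Nat.add_sub_cancel, show N + 1 - k = N - k + 1 by omega]
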